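/- Uniqueness of the Gaussian summation rule: for N distinct nodes x_0,…,x_{N−1} and n with 2n ≤ N, there is at most one choice of n distinct nodes s_1,…,s_n and weights w_1,…,w_n such that Σ_{k=1}^n w_k p(s_k) = (2/N) Σ_{j=0}^{N−1} p(x_j) for all polynomials p of degree ≤ 2n−1. -/

import Mathlib

/-!
Write `L p = (2/N) Σⱼ p(xⱼ)`. A rule exact to degree `2n - 1` makes its node polynomial
`π = ∏ₖ (X - sₖ)` orthogonal, for `⟨f, g⟩ = L (f g)`, to every polynomial of degree `< n`,
since `π q` vanishes at the nodes. For two such rules, `d = π - π'` has degree `< n` because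
both are monic of degree `n`, so `⟨d, d⟩ = ⟨π, d⟩ - ⟨π', d⟩ = 0`; as `⟨·, ·⟩` is definite on
polynomials of degree `< N`, `d = 0` and the nodes agree up to order. Each weight is then
`wₖ = L ℓₖ` for the Lagrange basis polynomial `ℓₖ` of the nodes.
-/

open Polynomial Finset Lagrange

section

variable {K : Type*} [Field K] {ι : Type*} [Fintype ι]

def IsExactQuadrature (L : K[X] →ₗ[K] K) (s w : ι → K) (m : ℕ) : Prop :=
  ∀ p : K[X], p.natDegree ≤ m → ∑ k, w k * p.eval (s k) = L p

theorem eval_nodal_univ_eq_zero_iff (s : ι → K) (a : K) :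
    (nodal univ s).eval a = 0 ↔ a ∈ Set.range s := by
  rw [eval_nodal, prod_eq_zero_iff]
  simp [sub_eq_zero, eq_comm]

theorem exists_equiv_of_nodal_univ_eq {s s' : ι → K} (hs : Function.Injective s)
    (hs' : Function.Injective s') (h : nodal univ s = nodal univ s') :
    ∃ σ : ι ≃ ι, ∀ k, s' (σ k) = s k := by
  have hrange : Set.range s = Set.range s' := by
    ext a
    rw [← eval_nodal_univ_eq_zero_iff, h, eval_nodal_univ_eq_zero_iff]
  refine ⟨(Equiv.ofInjective s hs).trans
    ((Equiv.setCongr hrange).trans (Equiv.ofInjective s' hs').symm), fun k => ?_⟩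
  simp [Equiv.apply_ofInjective_symm]

namespace IsExactQuadrature

variable {L : K[X] →ₗ[K] K} {s w : ι → K} {m : ℕ}

theorem comp_equiv {κ : Type*} [Fintype κ] (h : IsExactQuadrature L s w m) (σ : κ ≃ ι) :
    IsExactQuadrature L (s ∘ σ) (w ∘ σ) m := fun p hp => by
  simpa only [Function.comp_apply, Equiv.sum_comp σ (fun k => w k * p.eval (s k))] using h p hp

theorem weight_eq [DecidableEq ι] (h : IsExactQuadrature L s w m) (hs : Function.Injective s)
    (hm : Fintype.card ι - 1 ≤ m) (k : ι) : w k = L (Lagrange.basis univ s k) := by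
  rw [← h _ (by rwa [natDegree_basis hs.injOn (mem_univ k), card_univ]),
    sum_eq_single k (fun i _ hik => by rw [eval_basis_of_ne hik.symm (mem_univ i), mul_zero])
      (fun hk => absurd (mem_univ k) hk),
    eval_basis_self hs.injOn (mem_univ k), mul_one]

theorem map_nodal_mul_eq_zero (h : IsExactQuadrature L s w (2 * Fintype.card ι - 1))
    {q : K[X]} (hq : q.degree < Fintype.card ι) : L (nodal univ s * q) = 0 := by
  rcases eq_or_ne q 0 with rfl | hq0
  · rw [mul_zero, map_zero]
  have hdeg : (nodal univ s * q).natDegree ≤ 2 * Fintype.card ι - 1 := by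
    have := (natDegree_lt_iff_degree_lt hq0).2 hq
    have := natDegree_mul_le (p := nodal univ s) (q := q)
    rw [natDegree_nodal, card_univ] at this
    omega
  rw [← h _ hdeg]
  exact sum_eq_zero fun k _ => by rw [eval_mul, eval_nodal_at_node (mem_univ k), zero_mul, mul_zero]

theorem nodal_eq {s' w' : ι → K} (h : IsExactQuadrature L s w (2 * Fintype.card ι - 1))
    (h' : IsExactQuadrature L s' w' (2 * Fintype.card ι - 1))
    (hL : ∀ q : K[X], q.degree < Fintype.card ι → L (q * q) = 0 → q = 0) :
    nodal univ s = nodal univ s' := by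
  have hdeg : (nodal univ s - nodal univ s').degree < Fintype.card ι := by
    rw [← card_univ, ← degree_nodal (v := s)]
    exact degree_sub_lt_left (by rw [degree_nodal, degree_nodal]) nodal_ne_zero
      (by rw [nodal_monic.leadingCoeff, nodal_monic.leadingCoeff])
  refine sub_eq_zero.1 (hL _ hdeg ?_)
  rw [sub_mul, map_sub, h.map_nodal_mul_eq_zero hdeg, h'.map_nodal_mul_eq_zero hdeg, sub_zero]

end IsExactQuadrature

end

theorem eq_zero_of_sum_eval_mul_self_eq_zero {K : Type*} [Field K] [LinearOrder K]
    [IsStrictOrderedRing K] {ι : Type*} [Fintype ι] {x : ι → K} (hx : Function.Injective x)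
    {q : K[X]} (hq : q.degree < Fintype.card ι) (h : ∑ j, (q * q).eval (x j) = 0) : q = 0 := by
  simp only [eval_mul] at h
  refine eq_zero_of_degree_lt_of_eval_index_eq_zero univ hx.injOn (by rwa [card_univ]) fun j _ =>
    mul_self_eq_zero.1 ((sum_eq_zero_iff_of_nonneg fun i _ => mul_self_nonneg _).1 h j (mem_univ j))

theorem gauss_summation_rule_unique
    (N n : ℕ) (hn : 1 ≤ n) (h2n : 2 * n ≤ N)
    (x : Fin N → ℝ) (hx : Function.Injective x)
    (s s' : Fin n → ℝ) (hs : Function.Injective s) (hs' : Function.Injective s')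
    (w w' : Fin n → ℝ)
    (hexact : ∀ p : Polynomial ℝ, p.natDegree ≤ 2 * n - 1 →
      ∑ k, w k * p.eval (s k) = (2 / N) * ∑ j, p.eval (x j))
    (hexact' : ∀ p : Polynomial ℝ, p.natDegree ≤ 2 * n - 1 →
      ∑ k, w' k * p.eval (s' k) = (2 / N) * ∑ j, p.eval (x j)) :
    ∃ σ : Equiv.Perm (Fin n), ∀ k, s' (σ k) = s k ∧ w' (σ k) = w k := by
  set L : ℝ[X] →ₗ[ℝ] ℝ := (2 / N : ℝ) • ∑ j, leval (x j)
  have hL : ∀ p, L p = (2 / N) * ∑ j, p.eval (x j) := fun p => by simp [L]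
  have hN : (2 / N : ℝ) ≠ 0 := by
    have : (0 : ℝ) < N := by exact_mod_cast (by omega : 0 < N)
    positivity
  have hrule : IsExactQuadrature L s w (2 * Fintype.card (Fin n) - 1) := by
    simpa only [Fintype.card_fin, IsExactQuadrature, hL] using hexact
  have hrule' : IsExactQuadrature L s' w' (2 * Fintype.card (Fin n) - 1) := by
    simpa only [Fintype.card_fin, IsExactQuadrature, hL] using hexact'
  have hnN : (Fintype.card (Fin n) : WithBot ℕ) ≤ Fintype.card (Fin N) := by
    simp only [Fintype.card_fin, Nat.cast_le]
    omega
  have hdef : ∀ q : ℝ[X], q.degree < Fintype.card (Fin n) → L (q * q) = 0 → q = 0 :=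
    fun q hq hq0 => eq_zero_of_sum_eval_mul_self_eq_zero hx (hq.trans_le hnN)
      ((mul_eq_zero.1 ((hL _).symm.trans hq0)).resolve_left hN)
  obtain ⟨σ, hσ⟩ := exists_equiv_of_nodal_univ_eq hs hs' (hrule.nodal_eq hrule' hdef)
  have hsσ : s' ∘ σ = s := funext hσ
  have hcard : Fintype.card (Fin n) - 1 ≤ 2 * Fintype.card (Fin n) - 1 := by omega
  refine ⟨σ, fun k => ⟨hσ k, ?_⟩⟩
  have hw' := (hrule'.comp_equiv σ).weight_eq (hsσ ▸ hs) hcard k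
  rw [hsσ] at hw'
  exact hw'.trans (hrule.weight_eq hs hcard k).symm
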